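/- Weighted Poincaré inequality in the aperture: there exists a universal constant C > 0 (one may take C = 1/2) such that for every h > 0, every δ ∈ (0,1/4), and every continuously differentiable function v on the closure of Ω_{h,δ} with v(x₁,x₂,0) = 0 whenever √(x₁²+x₂²) < δ, one has ∫_{Ω_{h,δ}} |v(x)|²/(h+γ_s(r))² dx ≤ C·∫_{Ω_{h,δ}} |∂₃v(x)|² dx, where r = √(x₁²+x₂²). -/

import Mathlib

open Real MeasureTheory

noncomputable section

/-- `γ_s(r) = 1 - √(1 - r²)`. -/
def gam (r : ℝ) : ℝ := 1 - Real.sqrt (1 - r ^ 2)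

/-- `r(x) = √(x₁² + x₂²)`. -/
def rad (x : ℝ × ℝ × ℝ) : ℝ := Real.sqrt (x.1 ^ 2 + x.2.1 ^ 2)

/-- The cusp region `Ω_{h,δ} = {x : 0 < x₃ < h + γ_s(r), r < δ}`. -/
def Omg (h δ : ℝ) : Set (ℝ × ℝ × ℝ) :=
  {x | 0 < x.2.2 ∧ x.2.2 < h + gam (rad x) ∧ rad x < δ}

/-- Partial derivative `∂₃` of a function on `ℝ³`. -/
def p3 (f : ℝ × ℝ × ℝ → ℝ) (x : ℝ × ℝ × ℝ) : ℝ := deriv (fun s => f (x.1, x.2.1, s)) x.2.2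

/-!
On the vertical fibre over `(x₁, x₂)` the region is the interval `(0, H)` with `H = h + γ_s(r)`,
and `v` vanishes at its lower end. The fundamental theorem of calculus and Cauchy–Schwarz give
`v(t)² ≤ t ∫₀ᴴ (∂₃v)²`, and `∫₀ᴴ t / H² dt = 1/2` yields the one-dimensional inequality with
constant `1/2`. Fubini assembles the fibres; since `v` is `C¹` up to the compact closure of the
region, both integrands are bounded, hence integrable.
-/

open Set Topology Filter

theorem sq_intervalIntegral_le_mul_intervalIntegral_sq {f : ℝ → ℝ} {a b : ℝ} (hab : a ≤ b)
    (hf : IntervalIntegrable f volume a b)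
    (hf2 : IntervalIntegrable (fun x => f x ^ 2) volume a b) :
    (∫ x in a..b, f x) ^ 2 ≤ (b - a) * ∫ x in a..b, f x ^ 2 := by
  rcases hab.eq_or_lt with rfl | hlt
  · simp
  have hvol : volume.real (Ioc a b) = b - a := by simp [hab]
  have jensen := (Even.convexOn_pow (𝕜 := ℝ) even_two).map_set_average_le
    (continuous_pow 2).continuousOn isClosed_univ (by simp [hlt]) (by simp) (by simp) hf.1 hf2.1
  rw [setAverage_eq, setAverage_eq, hvol, smul_eq_mul, smul_eq_mul,
    ← intervalIntegral.integral_of_le hab, ← intervalIntegral.integral_of_le hab] at jensen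
  have hba : b - a ≠ 0 := (sub_pos.2 hlt).ne'
  calc (∫ x in a..b, f x) ^ 2 = (b - a) ^ 2 * ((b - a)⁻¹ * ∫ x in a..b, f x) ^ 2 := by
        field_simp
    _ ≤ (b - a) ^ 2 * ((b - a)⁻¹ * ∫ x in a..b, f x ^ 2) := by gcongr
    _ = (b - a) * ∫ x in a..b, f x ^ 2 := by field_simp

theorem sq_sub_le_mul_intervalIntegral_sq_of_hasDerivAt {φ ψ : ℝ → ℝ} {a b : ℝ} (hab : a ≤ b)
    (hφ : ContinuousOn φ (Icc a b)) (hderiv : ∀ x ∈ Ioo a b, HasDerivAt φ (ψ x) x)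
    (hψ : IntervalIntegrable ψ volume a b)
    (hψ2 : IntervalIntegrable (fun x => ψ x ^ 2) volume a b) :
    (φ b - φ a) ^ 2 ≤ (b - a) * ∫ x in a..b, ψ x ^ 2 := by
  rw [← intervalIntegral.integral_eq_sub_of_hasDerivAt_of_le hab hφ hderiv hψ]
  exact sq_intervalIntegral_le_mul_intervalIntegral_sq hab hψ hψ2

theorem setIntegral_sq_div_sq_le_half_setIntegral_deriv_sq {φ : ℝ → ℝ} {H : ℝ} (hH : 0 < H)
    (hφ : ContDiffOn ℝ 1 φ (Icc 0 H)) (h0 : φ 0 = 0) :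
    ∫ t in Ioo 0 H, φ t ^ 2 / H ^ 2 ≤ 1 / 2 * ∫ t in Ioo 0 H, deriv φ t ^ 2 := by
  set ψ := derivWithin φ (Icc 0 H)
  have hψ : ContinuousOn ψ (Icc 0 H) := hφ.continuousOn_derivWithin (uniqueDiffOn_Icc hH) le_rfl
  have hderiv : ∀ t ∈ Ioo 0 H, HasDerivAt φ (ψ t) t := by
    intro t ht
    have hnhds : Icc 0 H ∈ 𝓝 t := Icc_mem_nhds ht.1 ht.2
    rw [show ψ t = deriv φ t from derivWithin_of_mem_nhds hnhds]
    exact ((hφ t (Ioo_subset_Icc_self ht)).contDiffAt hnhds).differentiableAt one_ne_zero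
      |>.hasDerivAt
  have hψ2 : IntervalIntegrable (fun t => ψ t ^ 2) volume 0 H :=
    (hψ.pow 2).intervalIntegrable_of_Icc hH.le
  set K := ∫ t in (0)..H, ψ t ^ 2
  have pointwise : ∀ t ∈ Icc 0 H, φ t ^ 2 / H ^ 2 ≤ t * K / H ^ 2 := by
    rintro t ⟨ht0, htH⟩
    have hsub : Icc 0 t ⊆ Icc 0 H := Icc_subset_Icc le_rfl htH
    have hφt := sq_sub_le_mul_intervalIntegral_sq_of_hasDerivAt ht0 (hφ.continuousOn.mono hsub)
      (fun s hs => hderiv s ⟨hs.1, hs.2.trans_le htH⟩)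
      ((hψ.mono hsub).intervalIntegrable_of_Icc ht0)
      (((hψ.pow 2).mono hsub).intervalIntegrable_of_Icc ht0)
    have hmono : ∫ s in (0)..t, ψ s ^ 2 ≤ K :=
      intervalIntegral.integral_mono_interval le_rfl ht0 htH (ae_of_all _ fun s => sq_nonneg _) hψ2
    rw [h0, sub_zero, sub_zero] at hφt
    gcongr
    exact hφt.trans (mul_le_mul_of_nonneg_left hmono ht0)
  have hleft : ∫ t in Ioo 0 H, φ t ^ 2 / H ^ 2 = ∫ t in (0)..H, φ t ^ 2 / H ^ 2 := by
    rw [intervalIntegral.integral_of_le hH.le, integral_Ioc_eq_integral_Ioo]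
  have hright : ∫ t in Ioo 0 H, deriv φ t ^ 2 = K := by
    rw [show K = ∫ t in (0)..H, ψ t ^ 2 from rfl, intervalIntegral.integral_of_le hH.le,
      integral_Ioc_eq_integral_Ioo]
    exact setIntegral_congr_fun measurableSet_Ioo fun t ht => by rw [(hderiv t ht).deriv]
  calc ∫ t in Ioo 0 H, φ t ^ 2 / H ^ 2 ≤ ∫ t in (0)..H, t * K / H ^ 2 := by
        rw [hleft]
        exact intervalIntegral.integral_mono_on hH.le
          (((hφ.continuousOn.pow 2).div_const _).intervalIntegrable_of_Icc hH.le)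
          ((by fun_prop : Continuous fun t => t * K / H ^ 2).intervalIntegrable _ _) pointwise
    _ = 1 / 2 * ∫ t in Ioo 0 H, deriv φ t ^ 2 := by
        rw [hright, intervalIntegral.integral_div, intervalIntegral.integral_mul_const, integral_id]
        field_simp
        ring

theorem IsOpen.exists_norm_fderiv_le_of_contDiffOn_closure {E F : Type*} [NormedAddCommGroup E]
    [NormedSpace ℝ E] [NormedAddCommGroup F] [NormedSpace ℝ F] {f : E → F} {U : Set E}
    (hU : IsOpen U) (hK : IsCompact (closure U)) (hf : ContDiffOn ℝ 1 f (closure U)) :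
    ∃ M, ∀ x ∈ U, ‖fderiv ℝ f x‖ ≤ M := by
  suffices ∃ M, ∀ x ∈ closure U ∩ U, ‖fderiv ℝ f x‖ ≤ M by
    simpa only [inter_eq_right.2 subset_closure] using this
  refine hK.induction_on (p := fun t => ∃ M, ∀ x ∈ t ∩ U, ‖fderiv ℝ f x‖ ≤ M) ⟨0, by simp⟩
    (fun s t hst ⟨M, hM⟩ => ⟨M, fun x hx => hM x ⟨hst hx.1, hx.2⟩⟩)
    (fun s t ⟨M, hM⟩ ⟨N, hN⟩ => ⟨max M N, fun x ⟨hx, hxU⟩ => hx.elim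
      (fun hs => (hM x ⟨hs, hxU⟩).trans (le_max_left _ _))
      (fun ht => (hN x ⟨ht, hxU⟩).trans (le_max_right _ _))⟩) ?_
  -- near `x₀`, `fderiv ℝ f` agrees on `U` with a derivative `f'` continuous within the closure
  intro x₀ hx₀
  obtain ⟨u, hu, -, f', hf', hf'c⟩ :=
    (contDiffWithinAt_succ_iff_hasFDerivWithinAt (n := 0) (by simp)).1 (hf x₀ hx₀)
  rw [insert_eq_of_mem hx₀] at hu
  obtain ⟨o, ho, hx₀o, hou⟩ := mem_nhdsWithin.1 hu
  have hbound : ∀ᶠ y in 𝓝[closure U] x₀, ‖f' y‖ < ‖f' x₀‖ + 1 :=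
    nhdsWithin_le_of_mem hu (hf'c.continuousWithinAt.norm.eventually_lt_const (lt_add_one _))
  refine ⟨o ∩ {y | ‖f' y‖ < ‖f' x₀‖ + 1},
    inter_mem (mem_nhdsWithin_of_mem_nhds (ho.mem_nhds hx₀o)) hbound, ‖f' x₀‖ + 1, ?_⟩
  rintro y ⟨⟨hyo, hy⟩, hyU⟩
  have hUo : o ∩ U ⊆ u := fun z hz => hou ⟨hz.1, subset_closure hz.2⟩
  have hfderiv : fderiv ℝ f y = f' y :=
    ((hf' y (hUo ⟨hyo, hyU⟩)).hasFDerivAt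
      (mem_of_superset ((ho.inter hU).mem_nhds ⟨hyo, hyU⟩) hUo)).fderiv
  rw [hfderiv]
  exact hy.le

theorem integral_le_integral_of_ae_integral_fiber_le {α β : Type*} [MeasurableSpace α]
    [MeasurableSpace β] {μ : Measure α} {ν : Measure β} [SFinite μ] [SFinite ν] {f g : α × β → ℝ}
    (hf : Integrable f (μ.prod ν)) (hg : Integrable g (μ.prod ν))
    (hfg : ∀ᵐ a ∂μ, ∫ b, f (a, b) ∂ν ≤ ∫ b, g (a, b) ∂ν) :
    ∫ z, f z ∂(μ.prod ν) ≤ ∫ z, g z ∂(μ.prod ν) := by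
  rw [integral_prod f hf, integral_prod g hg]
  exact integral_mono_ae hf.integral_prod_left hg.integral_prod_left hfg

theorem integral_le_integral_of_integral_fiber_le₃ {α β γ : Type*} [MeasurableSpace α]
    [MeasurableSpace β] [MeasurableSpace γ] {μ : Measure α} {ν : Measure β} {ρ : Measure γ}
    [SFinite μ] [SFinite ν] [SFinite ρ] {f g : α × β × γ → ℝ}
    (hf : Integrable f (μ.prod (ν.prod ρ))) (hg : Integrable g (μ.prod (ν.prod ρ)))
    (hfg : ∀ a b, ∫ c, f (a, b, c) ∂ρ ≤ ∫ c, g (a, b, c) ∂ρ) :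
    ∫ z, f z ∂(μ.prod (ν.prod ρ)) ≤ ∫ z, g z ∂(μ.prod (ν.prod ρ)) := by
  refine integral_le_integral_of_ae_integral_fiber_le hf hg ?_
  filter_upwards [hf.prod_right_ae, hg.prod_right_ae] with a hfa hga
  exact integral_le_integral_of_ae_integral_fiber_le hfa hga (ae_of_all _ (hfg a))

theorem gam_nonneg (r : ℝ) : 0 ≤ gam r := by
  have : √(1 - r ^ 2) ≤ 1 := Real.sqrt_le_one.2 (by nlinarith)
  unfold gam; linarith

theorem gam_le_one (r : ℝ) : gam r ≤ 1 := by
  unfold gam; linarith [Real.sqrt_nonneg (1 - r ^ 2)]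

theorem continuous_rad : Continuous rad := by
  unfold rad; fun_prop

theorem continuous_gam : Continuous gam := by
  unfold gam; fun_prop

theorem isOpen_omg (h δ : ℝ) : IsOpen (Omg h δ) := by
  have hx₃ : Continuous fun x : ℝ × ℝ × ℝ => x.2.2 := by fun_prop
  exact (isOpen_lt continuous_const hx₃).inter ((isOpen_lt hx₃
    (continuous_const.add (continuous_gam.comp continuous_rad))).inter
    (isOpen_lt continuous_rad continuous_const))

theorem omg_subset_box (h δ : ℝ) :
    Omg h δ ⊆ Icc (-δ) δ ×ˢ Icc (-δ) δ ×ˢ Icc 0 (h + 1) := by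
  rintro x ⟨h0, htop, hr⟩
  have h1 : |x.1| < δ := (Real.abs_le_sqrt (by nlinarith)).trans_lt hr
  have h2 : |x.2.1| < δ := (Real.abs_le_sqrt (by nlinarith)).trans_lt hr
  rw [abs_lt] at h1 h2
  exact ⟨⟨h1.1.le, h1.2.le⟩, ⟨h2.1.le, h2.2.le⟩, h0.le, by linarith [gam_le_one (rad x)]⟩

theorem isCompact_closure_omg (h δ : ℝ) : IsCompact (closure (Omg h δ)) :=
  (isCompact_Icc.prod (isCompact_Icc.prod isCompact_Icc)).closure_of_subset (omg_subset_box h δ)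

theorem preimage_omg_of_lt {h δ a b : ℝ} (hr : √(a ^ 2 + b ^ 2) < δ) :
    (fun t : ℝ => ((a, b, t) : ℝ × ℝ × ℝ)) ⁻¹' Omg h δ = Ioo 0 (h + gam √(a ^ 2 + b ^ 2)) := by
  ext t; simp [Omg, rad, hr]

theorem preimage_omg_of_le {h δ a b : ℝ} (hr : δ ≤ √(a ^ 2 + b ^ 2)) :
    (fun t : ℝ => ((a, b, t) : ℝ × ℝ × ℝ)) ⁻¹' Omg h δ = ∅ := by
  ext t; simp [Omg, rad, hr.not_gt]

theorem p3_eq_fderiv {v : ℝ × ℝ × ℝ → ℝ} {x : ℝ × ℝ × ℝ} (hv : DifferentiableAt ℝ v x) :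
    p3 v x = fderiv ℝ v x (0, 0, 1) := by
  have hline : HasDerivAt (fun s : ℝ => ((x.1, x.2.1, s) : ℝ × ℝ × ℝ)) (0, 0, 1) x.2.2 :=
    (hasDerivAt_const _ _).prodMk ((hasDerivAt_const _ _).prodMk (hasDerivAt_id _))
  exact (hv.hasFDerivAt.comp_hasDerivAt x.2.2 hline).deriv

theorem integrableOn_sq_div_sq_omg {h δ : ℝ} (hh : 0 < h) {v : ℝ × ℝ × ℝ → ℝ}
    (hv : ContinuousOn v (closure (Omg h δ))) :
    IntegrableOn (fun x => v x ^ 2 / (h + gam (rad x)) ^ 2) (Omg h δ) := by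
  have hcont : ContinuousOn (fun x => v x ^ 2 / (h + gam (rad x)) ^ 2) (closure (Omg h δ)) :=
    (hv.pow 2).div ((continuous_const.add (continuous_gam.comp continuous_rad)).pow 2).continuousOn
      fun x _ => by have := gam_nonneg (rad x); positivity
  exact (hcont.integrableOn_compact (isCompact_closure_omg h δ)).mono_set subset_closure

theorem integrableOn_p3_sq_omg {h δ : ℝ} {v : ℝ × ℝ × ℝ → ℝ}
    (hv : ContDiffOn ℝ 1 v (closure (Omg h δ))) :
    IntegrableOn (fun x => p3 v x ^ 2) (Omg h δ) := by
  have hU := isOpen_omg h δ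
  have hvU : ContDiffOn ℝ 1 v (Omg h δ) := hv.mono subset_closure
  have hp3 : EqOn (fun x => p3 v x ^ 2) (fun x => fderiv ℝ v x (0, 0, 1) ^ 2) (Omg h δ) :=
    fun x hx => by
      simp only [p3_eq_fderiv ((hvU.contDiffAt (hU.mem_nhds hx)).differentiableAt one_ne_zero)]
  obtain ⟨M, hM⟩ := hU.exists_norm_fderiv_le_of_contDiffOn_closure (isCompact_closure_omg h δ) hv
  have hcont : ContinuousOn (fun x => fderiv ℝ v x (0, 0, 1) ^ 2) (Omg h δ) :=
    ((hvU.continuousOn_fderiv_of_isOpen hU le_rfl).clm_apply continuousOn_const).pow 2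
  refine (IntegrableOn.of_bound ((isCompact_closure_omg h δ).measure_lt_top.trans_le'
    (measure_mono subset_closure)) (hcont.aestronglyMeasurable hU.measurableSet) (M ^ 2) ?_)
    |>.congr_fun hp3.symm hU.measurableSet
  refine (ae_restrict_iff' hU.measurableSet).2 (ae_of_all _ fun x hx => ?_)
  have hw : ‖((0, 0, 1) : ℝ × ℝ × ℝ)‖ = 1 := by simp [Prod.norm_def]
  have hvx : ‖fderiv ℝ v x (0, 0, 1)‖ ≤ M :=
    ((fderiv ℝ v x).le_opNorm _).trans (by rw [hw, mul_one]; exact hM x hx)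
  rw [norm_pow]
  exact pow_le_pow_left₀ (norm_nonneg _) hvx 2

theorem integral_indicator_omg_fiber_le {h δ : ℝ} (hh : 0 < h) {v : ℝ × ℝ × ℝ → ℝ}
    (hv : ContDiffOn ℝ 1 v (closure (Omg h δ)))
    (hv0 : ∀ x₁ x₂ : ℝ, √(x₁ ^ 2 + x₂ ^ 2) < δ → v (x₁, x₂, 0) = 0) (a b : ℝ) :
    ∫ t, (Omg h δ).indicator (fun x => v x ^ 2 / (h + gam (rad x)) ^ 2) (a, b, t) ≤
      1 / 2 * ∫ t, (Omg h δ).indicator (fun x => p3 v x ^ 2) (a, b, t) := by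
  set line : ℝ → ℝ × ℝ × ℝ := fun t => (a, b, t)
  have hline : ContDiff ℝ 1 line := contDiff_const.prodMk (contDiff_const.prodMk contDiff_id)
  have hfiber (g : ℝ × ℝ × ℝ → ℝ) :
      ∫ t, (Omg h δ).indicator g (line t) = ∫ t in line ⁻¹' Omg h δ, g (line t) := by
    simp_rw [← indicator_comp_right]
    exact integral_indicator ((isOpen_omg h δ).measurableSet.preimage hline.continuous.measurable)
  rw [hfiber, hfiber]
  rcases lt_or_ge √(a ^ 2 + b ^ 2) δ with hr | hr
  · rw [preimage_omg_of_lt hr]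
    have hH : 0 < h + gam √(a ^ 2 + b ^ 2) := by linarith [gam_nonneg √(a ^ 2 + b ^ 2)]
    have hmaps : MapsTo line (Icc 0 (h + gam √(a ^ 2 + b ^ 2))) (closure (Omg h δ)) := by
      rw [← closure_Ioo hH.ne, ← preimage_omg_of_lt (h := h) hr]
      exact (mapsTo_preimage _ _).closure hline.continuous
    exact setIntegral_sq_div_sq_le_half_setIntegral_deriv_sq hH (hv.comp hline.contDiffOn hmaps)
      (hv0 a b hr)
  · rw [preimage_omg_of_le hr]
    simp

/-- Weighted Poincaré inequality in the aperture: for `v` of class `C¹` on the closure of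
`Ω_{h,δ}` vanishing on the bottom plate,
`∫_{Ω_{h,δ}} |v|²/(h+γ_s(r))² ≤ C ∫_{Ω_{h,δ}} |∂₃v|²` with a universal constant `C`. -/
theorem weighted_poincare_aperture :
    ∃ C : ℝ, 0 < C ∧ ∀ h δ : ℝ, 0 < h → δ ∈ Set.Ioo (0 : ℝ) (1 / 4) →
      ∀ v : ℝ × ℝ × ℝ → ℝ, ContDiffOn ℝ 1 v (closure (Omg h δ)) →
        (∀ x₁ x₂ : ℝ, Real.sqrt (x₁ ^ 2 + x₂ ^ 2) < δ → v (x₁, x₂, 0) = 0) →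
        (∫ x in Omg h δ, (v x) ^ 2 / (h + gam (rad x)) ^ 2) ≤
          C * ∫ x in Omg h δ, (p3 v x) ^ 2 := by
  refine ⟨1 / 2, by norm_num, fun h δ hh _ v hv hv0 => ?_⟩
  have hΩ : MeasurableSet (Omg h δ) := (isOpen_omg h δ).measurableSet
  calc ∫ x in Omg h δ, v x ^ 2 / (h + gam (rad x)) ^ 2
      = ∫ x, (Omg h δ).indicator (fun x => v x ^ 2 / (h + gam (rad x)) ^ 2) x :=
        (integral_indicator hΩ).symm
    _ ≤ ∫ x, 1 / 2 * (Omg h δ).indicator (fun x => p3 v x ^ 2) x :=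
        integral_le_integral_of_integral_fiber_le₃
          ((integrableOn_sq_div_sq_omg hh hv.continuousOn).integrable_indicator hΩ)
          (((integrableOn_p3_sq_omg hv).integrable_indicator hΩ).const_mul _)
          fun a b => by rw [integral_const_mul]; exact integral_indicator_omg_fiber_le hh hv hv0 a b
    _ = 1 / 2 * ∫ x in Omg h δ, p3 v x ^ 2 := by rw [integral_const_mul, integral_indicator hΩ]
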